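/- For every δ with 0 < δ ≤ 1/12 and all real numbers φ and c, the regularized energy density satisfies the coercivity bound f_δ(φ,c) ≥ c²/4 − 5. -/

import Mathlib

/-- The Flory–Huggins convex energy part `f₁(φ) = φ log φ + (1-φ) log(1-φ)`. -/
noncomputable def f1 (φ : ℝ) : ℝ := φ * Real.log φ + (1 - φ) * Real.log (1 - φ)

/-- The regularized convex energy part `f_{1,δ}`, obtained from `f₁` by quadratic
extension outside `[δ, 1-δ]`, using `f₁'(s) = log(s/(1-s))` and `f₁''(s) = 1/(s(1-s))`. -/
noncomputable def f1d (δ φ : ℝ) : ℝ :=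
  if φ ≤ δ then
    f1 δ + Real.log (δ / (1 - δ)) * (φ - δ) + 1 / (δ * (1 - δ)) * (φ - δ) ^ 2 / 2
  else if φ ≤ 1 - δ then f1 φ
  else
    f1 (1 - δ) + Real.log ((1 - δ) / δ) * (φ - (1 - δ))
      + 1 / (δ * (1 - δ)) * (φ - (1 - δ)) ^ 2 / 2

/-- The regularized energy density `f_δ(φ,c) = f_{1,δ}(φ) + φ(1-φ) + c²/2 + c(1-φ)`. -/
noncomputable def fd (δ φ c : ℝ) : ℝ :=
  f1d δ φ + φ * (1 - φ) + c ^ 2 / 2 + c * (1 - φ)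

/-!
Outside `[δ, 1-δ]` the quadratic extension has a nonnegative linear term (the slope of `f₁`
points away from the interval) and curvature `1/(δ(1-δ)) ≥ 1/δ`, so `f_{1,δ}(φ)` is at least
`-1 + dist(φ, [δ, 1-δ])²/(2δ)`, where `1/(2δ) ≥ 6`; inside it equals `f₁ ≥ -1`. This dominates
`(1-φ)² - φ(1-φ) - 5`, and completing the square
`c²/2 + c(1-φ) ≥ c²/4 - (1-φ)²` finishes the bound.
-/

open Real

theorem neg_one_le_f1 {φ : ℝ} (h0 : 0 ≤ φ) (h1 : φ ≤ 1) : -1 ≤ f1 φ := by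
  have hφ := negMulLog_le_one_sub_self h0
  have hφ' := negMulLog_le_one_sub_self (sub_nonneg.2 h1)
  simp only [negMulLog, f1] at *
  linarith

section Extension

variable {δ φ : ℝ}

theorem one_div_le_one_div_mul_one_sub (hδ0 : 0 < δ) (hδ : δ < 1) : 1 / δ ≤ 1 / (δ * (1 - δ)) :=
  one_div_le_one_div_of_le (mul_pos hδ0 (by linarith)) (mul_le_of_le_one_right hδ0.le (by linarith))

theorem f1d_ge_of_le (hδ0 : 0 < δ) (hδ : δ < 1 / 2) (hφ : φ ≤ δ) :
    f1 δ + (δ - φ) ^ 2 / (2 * δ) ≤ f1d δ φ := by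
  have hslope : log (δ / (1 - δ)) ≤ 0 :=
    log_nonpos (div_nonneg hδ0.le (by linarith)) ((div_le_one (by linarith)).2 (by linarith))
  have hcurv : (δ - φ) ^ 2 / (2 * δ) ≤ 1 / (δ * (1 - δ)) * (φ - δ) ^ 2 / 2 := by
    have := mul_le_mul_of_nonneg_right (one_div_le_one_div_mul_one_sub hδ0 (by linarith))
      (sq_nonneg (φ - δ))
    rw [show (δ - φ) ^ 2 / (2 * δ) = 1 / δ * (φ - δ) ^ 2 / 2 by field_simp; ring]
    linarith
  rw [f1d, if_pos hφ]
  nlinarith [mul_nonneg_of_nonpos_of_nonpos hslope (sub_nonpos.2 hφ)]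

theorem f1d_ge_of_one_sub_lt (hδ0 : 0 < δ) (hδ : δ < 1 / 2) (hφ : 1 - δ < φ) :
    f1 (1 - δ) + (φ - (1 - δ)) ^ 2 / (2 * δ) ≤ f1d δ φ := by
  have hslope : 0 ≤ log ((1 - δ) / δ) := log_nonneg ((le_div_iff₀ hδ0).2 (by linarith))
  have hcurv : (φ - (1 - δ)) ^ 2 / (2 * δ) ≤ 1 / (δ * (1 - δ)) * (φ - (1 - δ)) ^ 2 / 2 := by
    have := mul_le_mul_of_nonneg_right (one_div_le_one_div_mul_one_sub hδ0 (by linarith))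
      (sq_nonneg (φ - (1 - δ)))
    rw [show (φ - (1 - δ)) ^ 2 / (2 * δ) = 1 / δ * (φ - (1 - δ)) ^ 2 / 2 by field_simp]
    linarith
  rw [f1d, if_neg (by linarith), if_neg (by linarith)]
  nlinarith [mul_nonneg hslope (sub_nonneg.2 hφ.le)]

theorem f1d_of_mem_Ioc (hφ : φ ∈ Set.Ioc δ (1 - δ)) : f1d δ φ = f1 φ := by
  rw [f1d, if_neg (not_le.2 hφ.1), if_pos hφ.2]

theorem f1d_ge_quadratic (hδ0 : 0 < δ) (hδ : δ ≤ 1 / 12) (φ : ℝ) :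
    (1 - φ) ^ 2 - φ * (1 - φ) - 5 ≤ f1d δ φ := by
  have hcurv (t : ℝ) : 6 * t ^ 2 ≤ t ^ 2 / (2 * δ) :=
    (le_div_iff₀ (by linarith)).2 (by nlinarith [sq_nonneg t])
  rcases le_or_gt φ δ with hleft | hδφ
  · have hbound := f1d_ge_of_le hδ0 (by linarith) hleft
    have hf1 := neg_one_le_f1 hδ0.le (by linarith)
    nlinarith [hcurv (δ - φ), mul_nonneg (sub_nonneg.2 hleft) hδ0.le, sq_nonneg (δ - φ - 3 / 8)]
  rcases le_or_gt φ (1 - δ) with hmid | hright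
  · rw [f1d_of_mem_Ioc ⟨hδφ, hmid⟩]
    have hf1 := neg_one_le_f1 (by linarith) (by linarith)
    nlinarith
  · have hbound := f1d_ge_of_one_sub_lt hδ0 (by linarith) hright
    have hf1 := neg_one_le_f1 (sub_nonneg.2 (by linarith : δ ≤ 1)) (by linarith)
    nlinarith [hcurv (φ - (1 - δ)), mul_nonneg (sub_nonneg.2 hright.le) hδ0.le,
      sq_nonneg (φ - (1 - δ) - 1 / 8)]

end Extension

/-- Coercivity of the regularized energy density: `f_δ(φ,c) ≥ c²/4 - 5`. -/
theorem regularized_energy_coercive (δ : ℝ) (hδ0 : 0 < δ) (hδ : δ ≤ 1 / 12) (φ c : ℝ) :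
    fd δ φ c ≥ c ^ 2 / 4 - 5 := by
  have hf1d := f1d_ge_quadratic hδ0 hδ φ
  have hsquare : c ^ 2 / 4 - (1 - φ) ^ 2 ≤ c ^ 2 / 2 + c * (1 - φ) := by
    nlinarith [sq_nonneg (c / 2 + (1 - φ))]
  rw [fd]
  linarith
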